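/- arXiv:2211.14207 — 2 statements merged into one kernel-verified Lean document; each statement's English description precedes it below -/
import Mathlib

section
/- Let X, Δ ∈ ℝ^{N × 2} with X ≠ 0 and suppose ‖Δ‖_F ≤ 2‖X‖_F. Setting θ = ± arccos(1 - ‖Δ‖_F²/(2‖X‖_F²)), the perturbation Δ' = X R(θ)^T - X satisfies ‖Δ'‖_F = ‖Δ‖_F, and its parameters ε₁ = ⟨X, Δ'⟩_F, ε₂ = ⟨X R(-π/2)^T, Δ'⟩_F are given by ε₁ = -½‖Δ‖_F² and ε₂ = ∓½√(‖Δ‖_F² (4‖X‖_F² - ‖Δ‖_F²)). -/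
open Matrix

/-- Adversarial rotations: for `X ≠ 0` and `‖Δ‖_F ≤ 2‖X‖_F`, setting
`θ = ±arccos(1 - ‖Δ‖_F²/(2‖X‖_F²))` and `Δ' = X R(θ)ᵀ - X`, one has `‖Δ'‖_F = ‖Δ‖_F`,
`ε₁ = -½‖Δ‖_F²` and `ε₂ = ∓½√(‖Δ‖_F²(4‖X‖_F² - ‖Δ‖_F²))`. -/
theorem stmt16 (N : ℕ) (X Δ : Matrix (Fin N) (Fin 2) ℝ) (hX : X ≠ 0)
    (hle : Real.sqrt (∑ n, ∑ d, (Δ n d) ^ 2) ≤ 2 * Real.sqrt (∑ n, ∑ d, (X n d) ^ 2))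
    (s : ℝ) (hs : s = 1 ∨ s = -1) (θ : ℝ)
    (hθ : θ = s * Real.arccos (1 - (∑ n, ∑ d, (Δ n d) ^ 2) / (2 * ∑ n, ∑ d, (X n d) ^ 2)))
    (R : ℝ → Matrix (Fin 2) (Fin 2) ℝ)
    (hR : ∀ t, R t = !![Real.cos t, -Real.sin t; Real.sin t, Real.cos t])
    (Δ' : Matrix (Fin N) (Fin 2) ℝ) (hΔ' : Δ' = X * (R θ)ᵀ - X)
    (ε₁ ε₂ : ℝ)
    (hε₁ : ε₁ = ∑ n, ∑ d, X n d * Δ' n d)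
    (hε₂ : ε₂ = ∑ n, ∑ d, (X * (R (-(Real.pi / 2)))ᵀ) n d * Δ' n d) :
    Real.sqrt (∑ n, ∑ d, (Δ' n d) ^ 2) = Real.sqrt (∑ n, ∑ d, (Δ n d) ^ 2)
    ∧ ε₁ = -(1 / 2) * (∑ n, ∑ d, (Δ n d) ^ 2)
    ∧ ε₂ = -s * (1 / 2) *
        Real.sqrt ((∑ n, ∑ d, (Δ n d) ^ 2) *
          (4 * (∑ n, ∑ d, (X n d) ^ 2) - ∑ n, ∑ d, (Δ n d) ^ 2)) := by
  set SX : ℝ := ∑ n, ∑ d, (X n d) ^ 2 with hSX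
  set SΔ : ℝ := ∑ n, ∑ d, (Δ n d) ^ 2 with hSΔ
  have hex : ∃ n d, X n d ≠ 0 := by
    by_contra h
    push_neg at h
    exact hX (by ext n d; simpa using h n d)
  obtain ⟨n0, d0, hnd⟩ := hex
  have hSXpos : 0 < SX := by
    have h1 : ∀ n ∈ Finset.univ, (0:ℝ) ≤ ∑ d, (X n d) ^ 2 :=
      fun n _ => Finset.sum_nonneg fun d _ => sq_nonneg _
    refine Finset.sum_pos' h1 ⟨n0, Finset.mem_univ _, ?_⟩
    refine Finset.sum_pos' (fun d _ => sq_nonneg _) ⟨d0, Finset.mem_univ _, ?_⟩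
    positivity
  have hSΔnn : 0 ≤ SΔ :=
    Finset.sum_nonneg fun n _ => Finset.sum_nonneg fun d _ => sq_nonneg _
  have h4 : SΔ ≤ 4 * SX := by
    nlinarith [Real.sq_sqrt hSΔnn, Real.sq_sqrt hSXpos.le, Real.sqrt_nonneg SΔ,
      Real.sqrt_nonneg SX, hle]
  set a : ℝ := 1 - SΔ / (2 * SX) with ha
  have ha1 : -1 ≤ a := by
    have : SΔ / (2 * SX) ≤ 2 := by
      rw [div_le_iff₀ (by linarith)]; linarith
    rw [ha]; linarith
  have ha2 : a ≤ 1 := by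
    rw [ha]
    have : 0 ≤ SΔ / (2 * SX) := div_nonneg hSΔnn (by linarith)
    linarith
  have hcos : Real.cos θ = a := by
    rcases hs with h | h <;> rw [hθ, h] <;>
      simp [Real.cos_arccos ha1 ha2]
  have hsin : Real.sin θ = s * Real.sqrt (1 - a ^ 2) := by
    rcases hs with h | h <;> rw [hθ, h] <;>
      simp [Real.sin_arccos]
  set c : ℝ := Real.cos θ
  set sn : ℝ := Real.sin θ
  have hpy : sn ^ 2 + c ^ 2 = 1 := Real.sin_sq_add_cos_sq θ
  have e0 : ∀ n, Δ' n 0 = X n 0 * c - X n 1 * sn - X n 0 := by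
    intro n
    simp [hΔ', hR, Matrix.mul_apply, Fin.sum_univ_two, Matrix.vecHead, Matrix.vecTail]
    try ring
  have e1 : ∀ n, Δ' n 1 = X n 0 * sn + X n 1 * c - X n 1 := by
    intro n
    simp [hΔ', hR, Matrix.mul_apply, Fin.sum_univ_two, Matrix.vecHead, Matrix.vecTail]
    try ring
  have f0 : ∀ n, (X * (R (-(Real.pi / 2)))ᵀ) n 0 = X n 1 := by
    intro n
    simp [hR, Matrix.mul_apply, Fin.sum_univ_two, Matrix.vecHead, Matrix.vecTail]
  have f1 : ∀ n, (X * (R (-(Real.pi / 2)))ᵀ) n 1 = -X n 0 := by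
    intro n
    simp [hR, Matrix.mul_apply, Fin.sum_univ_two, Matrix.vecHead, Matrix.vecTail]
  have hSXrow : SX = ∑ n, (X n 0 ^ 2 + X n 1 ^ 2) := by
    rw [hSX]; exact Finset.sum_congr rfl fun n _ => by rw [Fin.sum_univ_two]
  -- sum of Δ' squares
  have hsum : (∑ n, ∑ d, (Δ' n d) ^ 2) = (2 - 2 * c) * SX := by
    have : (∑ n, ∑ d, (Δ' n d) ^ 2) = ∑ n, (2 - 2 * c) * (X n 0 ^ 2 + X n 1 ^ 2) := by
      refine Finset.sum_congr rfl fun n _ => ?_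
      rw [Fin.sum_univ_two, e0 n, e1 n]
      linear_combination (X n 0 ^ 2 + X n 1 ^ 2) * hpy
    rw [this, ← Finset.mul_sum, ← hSXrow]
  have hcval : (2 - 2 * c) * SX = SΔ := by
    rw [hcos, ha]; field_simp; ring
  constructor
  · rw [hsum, hcval]
  have hε₁' : ε₁ = (c - 1) * SX := by
    rw [hε₁]
    have : (∑ n, ∑ d, X n d * Δ' n d) = ∑ n, (c - 1) * (X n 0 ^ 2 + X n 1 ^ 2) := by
      refine Finset.sum_congr rfl fun n _ => ?_
      rw [Fin.sum_univ_two, e0 n, e1 n]; ring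
    rw [this, ← Finset.mul_sum, ← hSXrow]
  constructor
  · rw [hε₁', hcos, ha]; field_simp; ring
  · rw [hε₂]
    have : (∑ n, ∑ d, (X * (R (-(Real.pi / 2)))ᵀ) n d * Δ' n d)
        = ∑ n, (-sn) * (X n 0 ^ 2 + X n 1 ^ 2) := by
      refine Finset.sum_congr rfl fun n _ => ?_
      rw [Fin.sum_univ_two, e0 n, e1 n, f0 n, f1 n]; ring
    rw [this, ← Finset.mul_sum, ← hSXrow, hsin]
    have hkey : Real.sqrt (1 - a ^ 2) * SX
        = (1 / 2) * Real.sqrt (SΔ * (4 * SX - SΔ)) := by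
      have h1 : 1 - a ^ 2 = SΔ * (4 * SX - SΔ) / (2 * SX) ^ 2 := by
        rw [ha]; field_simp; ring
      rw [h1, Real.sqrt_div (by nlinarith : (0:ℝ) ≤ SΔ * (4 * SX - SΔ)),
        Real.sqrt_sq (by linarith : (0:ℝ) ≤ 2 * SX)]
      field_simp
    linear_combination (-s) * hkey
end

section
/- Let Δ ∈ ℝ^{N×D}, let Δ̄ ∈ ℝ^{1×D} be its column-wise averages, and let A = [-1_{N-1} | I_{N-1}] ∈ ℝ^{(N-1)×N}. Then vec(AΔ)^T Σ^{-1} vec(AΔ) = (1/σ²)‖Δ - 1_N Δ̄‖_F², where Σ ∈ ℝ^{(N-1)D × (N-1)D} is the block-diagonal matrix with D diagonal blocks each equal to B = σ² A A^T, and σ > 0. -/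
/-!
Since `A Aᵀ = I + J` with `J` the all-ones matrix and `J² = (N - 1) J`, one has
`(A Aᵀ)⁻¹ = I - J / N`. The covariance `Σ = I_D ⊗ B` is block diagonal, so the quadratic form
splits into one term per column `x` of `Δ`: with `w = A x = (x_{i+1} - x_0)_i` it equals
`σ⁻² (‖w‖² - (∑ w)² / N)`, and this is the shifted form of `∑ (x_i - x̄)² = ∑ y_i² - (∑ y)² / N`
for `y = x - x_0`.
-/

open Matrix Finset
open scoped Kronecker

section AllOnes

variable {K ι : Type*} [Field K] [Fintype ι]

theorem of_one_mul_of_one : (of 1 : Matrix ι ι K) * of 1 = (Fintype.card ι : K) • of 1 := by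
  ext; simp [mul_apply]

theorem of_one_mulVec (w : ι → K) : (of 1 : Matrix ι ι K) *ᵥ w = fun _ => ∑ i, w i := by
  ext; simp [mulVec, dotProduct]

variable [CharZero K] [DecidableEq ι]

theorem one_add_of_one_mul_one_sub_smul_of_one :
    (1 + of 1 : Matrix ι ι K) * (1 - ((Fintype.card ι : K) + 1)⁻¹ • of 1) = 1 := by
  have h : ((Fintype.card ι : K) + 1)⁻¹ * ((Fintype.card ι : K) + 1) = 1 :=
    inv_mul_cancel₀ (Nat.cast_add_one_ne_zero _)
  simp only [add_mul, mul_sub, one_mul, mul_one, mul_smul_comm, of_one_mul_of_one]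
  linear_combination (norm := module) -h • (of 1 : Matrix ι ι K)

theorem inv_one_add_of_one :
    (1 + of 1 : Matrix ι ι K)⁻¹ = 1 - ((Fintype.card ι : K) + 1)⁻¹ • of 1 :=
  inv_eq_right_inv one_add_of_one_mul_one_sub_smul_of_one

theorem isUnit_det_one_add_of_one : IsUnit (1 + of 1 : Matrix ι ι K).det :=
  isUnit_det_of_right_inverse one_add_of_one_mul_one_sub_smul_of_one

theorem dotProduct_inv_one_add_of_one_mulVec (w : ι → K) :
    w ⬝ᵥ (1 + of 1 : Matrix ι ι K)⁻¹ *ᵥ w = w ⬝ᵥ w - (∑ i, w i) ^ 2 / (Fintype.card ι + 1) := by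
  rw [inv_one_add_of_one, sub_mulVec, one_mulVec, smul_mulVec, of_one_mulVec, dotProduct_sub,
    dotProduct_smul]
  simp only [dotProduct, smul_eq_mul, ← sum_mul]
  ring

end AllOnes

theorem Matrix.inv_smul_of_ne_zero {n K : Type*} [Fintype n] [DecidableEq n] [Field K]
    {A : Matrix n n K} (hA : IsUnit A.det) {a : K} (ha : a ≠ 0) : (a • A)⁻¹ = a⁻¹ • A⁻¹ :=
  inv_smul' A (Units.mk0 a ha) hA

theorem Matrix.vec_dotProduct_one_kronecker_mulVec_vec {m n R : Type*} [CommSemiring R]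
    [Fintype m] [Fintype n] [DecidableEq n] (M : Matrix m m R) (X : Matrix m n R) :
    vec X ⬝ᵥ (1 ⊗ₖ M) *ᵥ vec X = ∑ j, Xᵀ j ⬝ᵥ M *ᵥ Xᵀ j := by
  rw [← vec_mul_eq_mulVec, vec_dotProduct_vec, trace]
  rfl

theorem sum_sq_sub_mean_eq {ι K : Type*} [Fintype ι] [Nonempty ι] [Field K] [CharZero K]
    (x : ι → K) (c : K) :
    ∑ i, (x i - (∑ j, x j) / Fintype.card ι) ^ 2
      = ∑ i, (x i - c) ^ 2 - (∑ i, (x i - c)) ^ 2 / Fintype.card ι := by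
  have : (Fintype.card ι : K) ≠ 0 := Nat.cast_ne_zero.2 Fintype.card_ne_zero
  simp only [sub_sq, sum_add_distrib, sum_sub_distrib, ← mul_sum, ← sum_mul, sum_const, card_univ,
    nsmul_eq_mul]
  field_simp
  ring

theorem sum_sq_sub_mean_fin_succ {K : Type*} [Field K] [CharZero K] {n : ℕ}
    (x : Fin (n + 1) → K) :
    ∑ i, (x i - (∑ j, x j) / (n + 1)) ^ 2
      = ∑ i : Fin n, (x i.succ - x 0) ^ 2 - (∑ i : Fin n, (x i.succ - x 0)) ^ 2 / (n + 1) := by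
  have h := sum_sq_sub_mean_eq x (x 0)
  rw [Fintype.card_fin, Nat.cast_add_one] at h
  rw [h, Fin.sum_univ_succ (fun i => (x i - x 0) ^ 2), Fin.sum_univ_succ (fun i => x i - x 0)]
  simp

def diffFirst (R : Type*) [Ring R] (n : ℕ) : Matrix (Fin n) (Fin (n + 1)) R :=
  of fun i j => if (j : ℕ) = 0 then -1 else if (j : ℕ) = (i : ℕ) + 1 then 1 else 0

section diffFirst

variable {R : Type*} [Ring R] {n : ℕ}

theorem diffFirst_mulVec (x : Fin (n + 1) → R) :
    diffFirst R n *ᵥ x = fun i => x i.succ - x 0 := by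
  ext i
  simp [diffFirst, mulVec, dotProduct, Fin.sum_univ_succ, Fin.val_eq_val, neg_add_eq_sub]

theorem diffFirst_mul_transpose :
    diffFirst R n * (diffFirst R n)ᵀ = 1 + of 1 := by
  ext i j
  change (diffFirst R n *ᵥ diffFirst R n j) i = _
  rw [diffFirst_mulVec]
  simp [diffFirst, one_apply, Fin.val_eq_val]

end diffFirst

theorem stmt18_general (n D : ℕ) (σ : ℝ) (hσ : 0 < σ)
    (Δ : Matrix (Fin (n + 1)) (Fin D) ℝ)
    (A : Matrix (Fin n) (Fin (n + 1)) ℝ)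
    (hA : ∀ i j, A i j = if (j : ℕ) = 0 then -1 else if (j : ℕ) = (i : ℕ) + 1 then 1 else 0)
    (B : Matrix (Fin n) (Fin n) ℝ) (hB : B = σ ^ 2 • (A * Aᵀ))
    (Sig : Matrix (Fin D × Fin n) (Fin D × Fin n) ℝ)
    (hSig : ∀ p q, Sig p q = if p.1 = q.1 then B p.2 q.2 else 0)
    (v : Fin D × Fin n → ℝ)
    (hv : ∀ p, v p = A.mulVec (fun i => Δ i p.1) p.2)
    (mean : Fin D → ℝ) (hmean : ∀ d, mean d = (∑ i, Δ i d) / (n + 1)) :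
    dotProduct v (Sig⁻¹.mulVec v)
      = (1 / σ ^ 2) * ∑ i, ∑ d, (Δ i d - mean d) ^ 2 := by
  obtain rfl : A = diffFirst ℝ n := Matrix.ext hA
  obtain rfl : Sig = 1 ⊗ₖ B := Matrix.ext fun p q => by simp [hSig, one_apply]
  obtain rfl : v = vec (diffFirst ℝ n * Δ) := funext hv
  obtain rfl : mean = fun d => (∑ i, Δ i d) / (n + 1) := funext hmean
  rw [inv_kronecker, inv_one, vec_dotProduct_one_kronecker_mulVec_vec, hB, diffFirst_mul_transpose,
    inv_smul_of_ne_zero isUnit_det_one_add_of_one (pow_ne_zero 2 hσ.ne'), sum_comm, mul_sum]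
  refine sum_congr rfl fun d _ => ?_
  have hcol : (diffFirst ℝ n * Δ)ᵀ d = diffFirst ℝ n *ᵥ fun i => Δ i d := rfl
  rw [hcol, smul_mulVec, dotProduct_smul, dotProduct_inv_one_add_of_one_mulVec, diffFirst_mulVec,
    sum_sq_sub_mean_fin_succ fun i => Δ i d]
  simp [dotProduct, sq, one_div]

/-- Quadratic-form identity behind the tight translation-invariance certificate:
with `A = [-1 | I_{N-1}]`, `B = σ² A Aᵀ`, `Σ = blockdiag(B, …, B)` and
`v = vec(AΔ)`, one has `vᵀ Σ⁻¹ v = (1/σ²) ‖Δ - 1_N Δ̄‖_F²`. -/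
theorem stmt18 (n D : ℕ) (hn : 1 ≤ n) (σ : ℝ) (hσ : 0 < σ)
    (Δ : Matrix (Fin (n + 1)) (Fin D) ℝ)
    (A : Matrix (Fin n) (Fin (n + 1)) ℝ)
    (hA : ∀ i j, A i j = if (j : ℕ) = 0 then -1 else if (j : ℕ) = (i : ℕ) + 1 then 1 else 0)
    (B : Matrix (Fin n) (Fin n) ℝ) (hB : B = σ ^ 2 • (A * Aᵀ))
    (Sig : Matrix (Fin D × Fin n) (Fin D × Fin n) ℝ)
    (hSig : ∀ p q, Sig p q = if p.1 = q.1 then B p.2 q.2 else 0)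
    (v : Fin D × Fin n → ℝ)
    (hv : ∀ p, v p = A.mulVec (fun i => Δ i p.1) p.2)
    (mean : Fin D → ℝ) (hmean : ∀ d, mean d = (∑ i, Δ i d) / (n + 1)) :
    dotProduct v (Sig⁻¹.mulVec v)
      = (1 / σ ^ 2) * ∑ i, ∑ d, (Δ i d - mean d) ^ 2 :=
  stmt18_general n D σ hσ Δ A hA B hB Sig hSig v hv mean hmean
end
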